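/- Fix a₁, a₂ > 0, ν > 0, and data ỹ ∈ ℝ⁴ with (ỹ₁, ỹ₃) ≠ (0,0), (ỹ₂, ỹ₄) ≠ (0,0), and A ≠ 0. Then the unweighted cost evaluated at the two critical points satisfies ∑ᵢ (ε^+ᵢ)² = α^+·(S·ν² + T)/(δ·(ν+1)²) and ∑ᵢ (ε^−ᵢ)² = α^−·(S·ν² + T)/(δ·(ν+1)²). -/

import Mathlib

open Matrix Real

noncomputable section

/-- q = (a₁, −a₁, a₂, −a₂). -/
def qv (a₁ a₂ : ℝ) : Fin 4 → ℝ := ![a₁, -a₁, a₂, -a₂]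

/-- The weights λ = (a₁, νa₁, a₂, νa₂). -/
def lv (a₁ a₂ ν : ℝ) : Fin 4 → ℝ := ![a₁, ν * a₁, a₂, ν * a₂]

/-- A = a₁ỹ₁² − ν²a₁ỹ₂² + a₂ỹ₃² − ν²a₂ỹ₄². -/
def Aq (a₁ a₂ ν : ℝ) (y : Fin 4 → ℝ) : ℝ :=
  a₁ * y 0 ^ 2 - ν ^ 2 * a₁ * y 1 ^ 2 + a₂ * y 2 ^ 2 - ν ^ 2 * a₂ * y 3 ^ 2

/-- B = 2ν(a₁ỹ₁² + νa₁ỹ₂² + a₂ỹ₃² + νa₂ỹ₄²). -/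
def Bq (a₁ a₂ ν : ℝ) (y : Fin 4 → ℝ) : ℝ :=
  2 * ν * (a₁ * y 0 ^ 2 + ν * a₁ * y 1 ^ 2 + a₂ * y 2 ^ 2 + ν * a₂ * y 3 ^ 2)

/-- C = ν²(a₁ỹ₁² − a₁ỹ₂² + a₂ỹ₃² − a₂ỹ₄²). -/
def Cq (a₁ a₂ ν : ℝ) (y : Fin 4 → ℝ) : ℝ :=
  ν ^ 2 * (a₁ * y 0 ^ 2 - a₁ * y 1 ^ 2 + a₂ * y 2 ^ 2 - a₂ * y 3 ^ 2)

/-- Δ = B² − 4AC. -/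
def Dq (a₁ a₂ ν : ℝ) (y : Fin 4 → ℝ) : ℝ :=
  Bq a₁ a₂ ν y ^ 2 - 4 * Aq a₁ a₂ ν y * Cq a₁ a₂ ν y

/-- s⁺ = (−B + √Δ)/(2A). -/
def sP (a₁ a₂ ν : ℝ) (y : Fin 4 → ℝ) : ℝ :=
  (-Bq a₁ a₂ ν y + Real.sqrt (Dq a₁ a₂ ν y)) / (2 * Aq a₁ a₂ ν y)

/-- s⁻ = (−B − √Δ)/(2A). -/
def sM (a₁ a₂ ν : ℝ) (y : Fin 4 → ℝ) : ℝ :=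
  (-Bq a₁ a₂ ν y - Real.sqrt (Dq a₁ a₂ ν y)) / (2 * Aq a₁ a₂ ν y)

/-- ε⁺ᵢ = s⁺qᵢỹᵢ/(λᵢ − s⁺qᵢ). -/
def eP (a₁ a₂ ν : ℝ) (y : Fin 4 → ℝ) : Fin 4 → ℝ := fun i =>
  sP a₁ a₂ ν y * qv a₁ a₂ i * y i / (lv a₁ a₂ ν i - sP a₁ a₂ ν y * qv a₁ a₂ i)

/-- ε⁻ᵢ = s⁻qᵢỹᵢ/(λᵢ − s⁻qᵢ). -/
def eM (a₁ a₂ ν : ℝ) (y : Fin 4 → ℝ) : Fin 4 → ℝ := fun i =>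
  sM a₁ a₂ ν y * qv a₁ a₂ i * y i / (lv a₁ a₂ ν i - sM a₁ a₂ ν y * qv a₁ a₂ i)

/-- ε is a critical point of the weighted triangulation problem with weights l:
the constraint ∑ᵢ qᵢ(ỹᵢ + εᵢ)² = 0 holds and there is a Lagrange multiplier s with
lᵢεᵢ = s·qᵢ·(ỹᵢ + εᵢ) for all i. -/
def IsCrit (a₁ a₂ : ℝ) (l : Fin 4 → ℝ) (y ε : Fin 4 → ℝ) : Prop :=
  (∑ i, qv a₁ a₂ i * (y i + ε i) ^ 2 = 0) ∧
    ∃ s : ℝ, ∀ i, l i * ε i = s * qv a₁ a₂ i * (y i + ε i)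

end

/-- α⁺ = (√(a₁ỹ₁² + a₂ỹ₃²) − √(a₁ỹ₂² + a₂ỹ₄²))². -/
noncomputable def alphaP (a₁ a₂ : ℝ) (y : Fin 4 → ℝ) : ℝ :=
  (Real.sqrt (a₁ * y 0 ^ 2 + a₂ * y 2 ^ 2) - Real.sqrt (a₁ * y 1 ^ 2 + a₂ * y 3 ^ 2)) ^ 2

/-- α⁻ = (√(a₁ỹ₁² + a₂ỹ₃²) + √(a₁ỹ₂² + a₂ỹ₄²))². -/
noncomputable def alphaM (a₁ a₂ : ℝ) (y : Fin 4 → ℝ) : ℝ :=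
  (Real.sqrt (a₁ * y 0 ^ 2 + a₂ * y 2 ^ 2) + Real.sqrt (a₁ * y 1 ^ 2 + a₂ * y 3 ^ 2)) ^ 2

/-- δ = (a₁ỹ₁² + a₂ỹ₃²)(a₁ỹ₂² + a₂ỹ₄²). -/
def deltaQ (a₁ a₂ : ℝ) (y : Fin 4 → ℝ) : ℝ :=
  (a₁ * y 0 ^ 2 + a₂ * y 2 ^ 2) * (a₁ * y 1 ^ 2 + a₂ * y 3 ^ 2)

/-- S = (ỹ₁² + ỹ₃²)(a₁ỹ₂² + a₂ỹ₄²). -/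
def Sq (a₁ a₂ : ℝ) (y : Fin 4 → ℝ) : ℝ :=
  (y 0 ^ 2 + y 2 ^ 2) * (a₁ * y 1 ^ 2 + a₂ * y 3 ^ 2)

/-- T = (ỹ₂² + ỹ₄²)(a₁ỹ₁² + a₂ỹ₃²). -/
def Tq (a₁ a₂ : ℝ) (y : Fin 4 → ℝ) : ℝ :=
  (y 1 ^ 2 + y 3 ^ 2) * (a₁ * y 0 ^ 2 + a₂ * y 2 ^ 2)

set_option maxHeartbeats 1000000

/-- the unweighted cost at the two critical points satisfies
∑(ε⁺ᵢ)² = α⁺(Sν² + T)/(δ(ν+1)²) and ∑(ε⁻ᵢ)² = α⁻(Sν² + T)/(δ(ν+1)²). -/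
theorem unweighted_cost_at_critical_points (a₁ a₂ ν : ℝ) (y : Fin 4 → ℝ)
    (ha₁ : 0 < a₁) (ha₂ : 0 < a₂) (hν : 0 < ν)
    (h13 : ¬(y 0 = 0 ∧ y 2 = 0)) (h24 : ¬(y 1 = 0 ∧ y 3 = 0))
    (hA : Aq a₁ a₂ ν y ≠ 0) :
    (∑ i, eP a₁ a₂ ν y i ^ 2 =
      alphaP a₁ a₂ y * (Sq a₁ a₂ y * ν ^ 2 + Tq a₁ a₂ y) /
        (deltaQ a₁ a₂ y * (ν + 1) ^ 2)) ∧
    (∑ i, eM a₁ a₂ ν y i ^ 2 =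
      alphaM a₁ a₂ y * (Sq a₁ a₂ y * ν ^ 2 + Tq a₁ a₂ y) /
        (deltaQ a₁ a₂ y * (ν + 1) ^ 2)) := by
  have h1ν : (0:ℝ) < 1 + ν := by linarith
  have hu : 0 < a₁ * y 0 ^ 2 + a₂ * y 2 ^ 2 := by
    rcases not_and_or.mp h13 with h | h
    · have h0 : 0 < y 0 ^ 2 := by positivity
      nlinarith [sq_nonneg (y 2)]
    · have h0 : 0 < y 2 ^ 2 := by positivity
      nlinarith [sq_nonneg (y 0)]
  have hv : 0 < a₁ * y 1 ^ 2 + a₂ * y 3 ^ 2 := by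
    rcases not_and_or.mp h24 with h | h
    · have h0 : 0 < y 1 ^ 2 := by positivity
      nlinarith [sq_nonneg (y 3)]
    · have h0 : 0 < y 3 ^ 2 := by positivity
      nlinarith [sq_nonneg (y 1)]
  simp only [alphaP, alphaM, deltaQ, Sq, Tq]
  have hp' : Real.sqrt (a₁ * y 0 ^ 2 + a₂ * y 2 ^ 2) ^ 2 = a₁ * y 0 ^ 2 + a₂ * y 2 ^ 2 :=
    Real.sq_sqrt hu.le
  have hr' : Real.sqrt (a₁ * y 1 ^ 2 + a₂ * y 3 ^ 2) ^ 2 = a₁ * y 1 ^ 2 + a₂ * y 3 ^ 2 :=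
    Real.sq_sqrt hv.le
  have hp0' : 0 < Real.sqrt (a₁ * y 0 ^ 2 + a₂ * y 2 ^ 2) := Real.sqrt_pos.mpr hu
  have hr0' : 0 < Real.sqrt (a₁ * y 1 ^ 2 + a₂ * y 3 ^ 2) := Real.sqrt_pos.mpr hv
  generalize hpdef : Real.sqrt (a₁ * y 0 ^ 2 + a₂ * y 2 ^ 2) = p at hp' hp0' ⊢
  generalize hrdef : Real.sqrt (a₁ * y 1 ^ 2 + a₂ * y 3 ^ 2) = r at hr' hr0' ⊢
  have hp : p ^ 2 = a₁ * y 0 ^ 2 + a₂ * y 2 ^ 2 := hp'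
  have hr : r ^ 2 = a₁ * y 1 ^ 2 + a₂ * y 3 ^ 2 := hr'
  have hp0 : 0 < p := hp0'
  have hr0 : 0 < r := hr0'
  have hAq : Aq a₁ a₂ ν y = p ^ 2 - ν ^ 2 * r ^ 2 := by
    simp only [Aq]; linear_combination -hp + ν ^ 2 * hr
  have hBq : Bq a₁ a₂ ν y = 2 * ν * (p ^ 2 + ν * r ^ 2) := by
    simp only [Bq]; linear_combination (-2 * ν) * hp + (-2 * ν ^ 2) * hr
  have hA2 : p ^ 2 - ν ^ 2 * r ^ 2 ≠ 0 := hAq ▸ hA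
  have hpνr : 0 < p + ν * r := by positivity
  have hpmr : p - ν * r ≠ 0 := fun h => hA2 (by nlinarith [h])
  have hΔ : Real.sqrt (Dq a₁ a₂ ν y) = 2 * ν * (1 + ν) * p * r := by
    have h1 : Dq a₁ a₂ ν y = (2 * ν * (1 + ν) * p * r) ^ 2 := by
      have h2 : Dq a₁ a₂ ν y = 4 * ν ^ 2 * (1 + ν) ^ 2 *
          ((a₁ * y 0 ^ 2 + a₂ * y 2 ^ 2) * (a₁ * y 1 ^ 2 + a₂ * y 3 ^ 2)) := by
        simp only [Dq, Aq, Bq, Cq]; ring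
      rw [h2, ← hp, ← hr]; ring
    rw [h1, Real.sqrt_sq (by positivity)]
  have h2A : 2 * Aq a₁ a₂ ν y ≠ 0 := by
    simpa using hA
  -- the plus critical point
  have hsP : sP a₁ a₂ ν y = -(ν * (p - r)) / (p + ν * r) := by
    rw [sP, hΔ, div_eq_div_iff h2A hpνr.ne']
    rw [hAq, hBq]; ring
  have h1s : (1:ℝ) - sP a₁ a₂ ν y = (1 + ν) * p / (p + ν * r) := by
    rw [hsP]; field_simp; ring
  have hνs : ν + sP a₁ a₂ ν y = ν * (1 + ν) * r / (p + ν * r) := by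
    rw [hsP]; field_simp; ring
  have h1s0 : (1:ℝ) - sP a₁ a₂ ν y ≠ 0 := by
    rw [h1s]; positivity
  have hνs0 : ν + sP a₁ a₂ ν y ≠ 0 := by
    rw [hνs]; positivity
  have hR1 : sP a₁ a₂ ν y / (1 - sP a₁ a₂ ν y) = -(ν * (p - r)) / ((1 + ν) * p) := by
    rw [h1s, hsP]
    field_simp
  have hR2 : sP a₁ a₂ ν y / (ν + sP a₁ a₂ ν y) = -(p - r) / ((1 + ν) * r) := by
    rw [hνs, hsP]
    field_simp
  -- the minus critical point
  have hsM : sM a₁ a₂ ν y = -(ν * (p + r)) / (p - ν * r) := by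
    rw [sM, div_eq_div_iff h2A hpmr]
    rw [hAq, hBq, hΔ]; ring
  have h1sM : (1:ℝ) - sM a₁ a₂ ν y = (1 + ν) * p / (p - ν * r) := by
    rw [hsM]; field_simp; ring
  have hνsM : ν + sM a₁ a₂ ν y = -(ν * (1 + ν) * r) / (p - ν * r) := by
    rw [hsM]; field_simp; ring
  have h1sM0 : (1:ℝ) - sM a₁ a₂ ν y ≠ 0 := by
    rw [h1sM]; exact div_ne_zero (by positivity) hpmr
  have hνsM0 : ν + sM a₁ a₂ ν y ≠ 0 := by
    rw [hνsM]; exact div_ne_zero (neg_ne_zero.mpr (by positivity)) hpmr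
  have hR1M : sM a₁ a₂ ν y / (1 - sM a₁ a₂ ν y) = -(ν * (p + r)) / ((1 + ν) * p) := by
    rw [h1sM, hsM]
    field_simp [hpmr]
  have hR2M : sM a₁ a₂ ν y / (ν + sM a₁ a₂ ν y) = (p + r) / ((1 + ν) * r) := by
    rw [hνsM, hsM]
    field_simp [hpmr]
  constructor
  · have e0 : eP a₁ a₂ ν y 0 = sP a₁ a₂ ν y * y 0 / (1 - sP a₁ a₂ ν y) := by
      simp only [eP, qv, lv, Matrix.cons_val_zero]
      rw [div_eq_div_iff (by
        rw [show a₁ - sP a₁ a₂ ν y * a₁ = a₁ * (1 - sP a₁ a₂ ν y) by ring]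
        exact mul_ne_zero ha₁.ne' h1s0) h1s0]
      ring
    have e1 : eP a₁ a₂ ν y 1 = -(sP a₁ a₂ ν y * y 1) / (ν + sP a₁ a₂ ν y) := by
      simp only [eP, qv, lv, Matrix.cons_val_one, Matrix.head_cons, Matrix.cons_val_zero]
      rw [div_eq_div_iff (by
        rw [show ν * a₁ - sP a₁ a₂ ν y * -a₁ = a₁ * (ν + sP a₁ a₂ ν y) by ring]
        exact mul_ne_zero ha₁.ne' hνs0) hνs0]
      ring
    have e2 : eP a₁ a₂ ν y 2 = sP a₁ a₂ ν y * y 2 / (1 - sP a₁ a₂ ν y) := by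
      simp only [eP, qv, lv, Matrix.cons_val_two, Matrix.tail_cons, Matrix.head_cons]
      rw [div_eq_div_iff (by
        rw [show a₂ - sP a₁ a₂ ν y * a₂ = a₂ * (1 - sP a₁ a₂ ν y) by ring]
        exact mul_ne_zero ha₂.ne' h1s0) h1s0]
      ring
    have e3 : eP a₁ a₂ ν y 3 = -(sP a₁ a₂ ν y * y 3) / (ν + sP a₁ a₂ ν y) := by
      simp only [eP, qv, lv, Matrix.cons_val_three, Matrix.tail_cons, Matrix.head_cons]
      rw [div_eq_div_iff (by
        rw [show ν * a₂ - sP a₁ a₂ ν y * -a₂ = a₂ * (ν + sP a₁ a₂ ν y) by ring]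
        exact mul_ne_zero ha₂.ne' hνs0) hνs0]
      ring
    rw [Fin.sum_univ_four, e0, e1, e2, e3]
    simp only [neg_div, mul_div_right_comm]
    rw [hR1, hR2, ← hp, ← hr]
    field_simp
    ring
  · have e0 : eM a₁ a₂ ν y 0 = sM a₁ a₂ ν y * y 0 / (1 - sM a₁ a₂ ν y) := by
      simp only [eM, qv, lv, Matrix.cons_val_zero]
      rw [div_eq_div_iff (by
        rw [show a₁ - sM a₁ a₂ ν y * a₁ = a₁ * (1 - sM a₁ a₂ ν y) by ring]
        exact mul_ne_zero ha₁.ne' h1sM0) h1sM0]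
      ring
    have e1 : eM a₁ a₂ ν y 1 = -(sM a₁ a₂ ν y * y 1) / (ν + sM a₁ a₂ ν y) := by
      simp only [eM, qv, lv, Matrix.cons_val_one, Matrix.head_cons, Matrix.cons_val_zero]
      rw [div_eq_div_iff (by
        rw [show ν * a₁ - sM a₁ a₂ ν y * -a₁ = a₁ * (ν + sM a₁ a₂ ν y) by ring]
        exact mul_ne_zero ha₁.ne' hνsM0) hνsM0]
      ring
    have e2 : eM a₁ a₂ ν y 2 = sM a₁ a₂ ν y * y 2 / (1 - sM a₁ a₂ ν y) := by
      simp only [eM, qv, lv, Matrix.cons_val_two, Matrix.tail_cons, Matrix.head_cons]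
      rw [div_eq_div_iff (by
        rw [show a₂ - sM a₁ a₂ ν y * a₂ = a₂ * (1 - sM a₁ a₂ ν y) by ring]
        exact mul_ne_zero ha₂.ne' h1sM0) h1sM0]
      ring
    have e3 : eM a₁ a₂ ν y 3 = -(sM a₁ a₂ ν y * y 3) / (ν + sM a₁ a₂ ν y) := by
      simp only [eM, qv, lv, Matrix.cons_val_three, Matrix.tail_cons, Matrix.head_cons]
      rw [div_eq_div_iff (by
        rw [show ν * a₂ - sM a₁ a₂ ν y * -a₂ = a₂ * (ν + sM a₁ a₂ ν y) by ring]
        exact mul_ne_zero ha₂.ne' hνsM0) hνsM0]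
      ring
    rw [Fin.sum_univ_four, e0, e1, e2, e3]
    simp only [neg_div, mul_div_right_comm]
    rw [hR1M, hR2M, ← hp, ← hr]
    field_simp
    ring
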